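/- arXiv:2402.15406 — 3 statements merged into one kernel-verified Lean document; each statement's English description precedes it below -/
import Mathlib

section
/- Let n be a positive natural number, let α ∈ (0,1) be such that ⌈(n+1)(1−α)⌉ ≤ n, and let S₁, …, Sₙ, S_{n+1} be independent and identically distributed real-valued random variables on a probability space. Define q̂ to be the ⌈(n+1)(1−α)⌉-th smallest value among S₁, …, Sₙ (equivalently, q̂ = inf{q ∈ ℝ : #{i ≤ n : Sᵢ ≤ q}/n ≥ ⌈(n+1)(1−α)⌉/n}). Then ℙ(S_{n+1} ≤ q̂) ≥ 1 − α. -/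
/-!
Put `k = ⌈(n+1)(1-α)⌉`. Since `q̂` is the `k`-th smallest of `S₁, …, Sₙ`, the event
`S_{n+1} ≤ q̂` says that fewer than `k` scores lie strictly below `S_{n+1}`, i.e. that the
strict rank of `S_{n+1}` among all `n+1` scores is `< k`. The joint law of i.i.d. scores is a
product measure, invariant under permuting coordinates, so every score has strict rank `< k`
with the same probability `p`. In every realisation at least `k` scores have strict rank `< k`:
otherwise a score of minimal value among those of rank `≥ k` would have `k` scores strictly
below it, all of rank `< k`. Hence `(n+1) p ≥ k ≥ (n+1)(1-α)`.
-/

open MeasureTheory ProbabilityTheory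
open scoped Classical

open Finset
open scoped ENNReal

section Rank

variable {ι α : Type*} [Fintype ι] [LinearOrder α]

def strictRank (x : ι → α) (j : ι) : ℕ := #{i | x i < x j}

theorem strictRank_comp_equiv {κ : Type*} [Fintype κ] (x : ι → α) (e : κ ≃ ι) (j : κ) :
    strictRank (x ∘ e) j = strictRank x (e j) :=
  card_equiv e (by simp)

theorem strictRank_last {n : ℕ} (x : Fin (n + 1) → α) :
    strictRank x (Fin.last n) = #{i : Fin n | x i.castSucc < x (Fin.last n)} := by
  simp only [strictRank, card_filter, Fin.sum_univ_castSucc, lt_irrefl, if_false, add_zero]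

theorem le_card_filter_strictRank_lt (x : ι → α) {k : ℕ} (hk : k ≤ Fintype.card ι) :
    k ≤ #{j | strictRank x j < k} := by
  set A : Finset ι := {j | strictRank x j < k}
  by_cases hA : Aᶜ.Nonempty
  · obtain ⟨j, hjA, hmin⟩ := Aᶜ.exists_min_image x hA
    have hsub : ({i | x i < x j} : Finset ι) ⊆ A := fun i hi => by
      by_contra hiA
      exact (mem_filter.1 hi).2.not_ge (hmin i (mem_compl.2 hiA))
    calc k ≤ strictRank x j := by simpa [A] using hjA
      _ ≤ #A := card_le_card hsub
  · rw [not_nonempty_iff_eq_empty, compl_eq_empty_iff] at hA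
    rwa [hA, card_univ]

end Rank

section OrderStatistic

variable {ι α : Type*} [Fintype ι] [ConditionallyCompleteLinearOrder α]

-- `1 ≤ k ≤ card ι` keeps the set nonempty and bounded below, so `sInf` is no junk value.
theorem le_sInf_setOf_le_card_filter_le_iff (v : ι → α) {k : ℕ} (hk1 : 1 ≤ k)
    (hk : k ≤ Fintype.card ι) (s : α) :
    s ≤ sInf {q | k ≤ #{i | v i ≤ q}} ↔ #{i | v i < s} < k := by
  obtain ⟨m, hm⟩ := (Set.finite_range v).bddBelow
  obtain ⟨M, hM⟩ := (Set.finite_range v).bddAbove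
  have hne : {q | k ≤ #{i | v i ≤ q}}.Nonempty :=
    ⟨M, by simpa [filter_true_of_mem fun i _ => hM (Set.mem_range_self i)] using hk⟩
  have hbdd : BddBelow {q | k ≤ #{i | v i ≤ q}} := ⟨m, fun q hq => by
    obtain ⟨i, hi⟩ := card_pos.1 (lt_of_lt_of_le hk1 hq)
    exact (hm (Set.mem_range_self i)).trans (mem_filter.1 hi).2⟩
  rw [le_csInf_iff hbdd hne]
  constructor
  · intro h
    by_contra! hks
    obtain ⟨i, hi, hmax⟩ := exists_max_image {i | v i < s} v (card_pos.1 (by omega))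
    have hsub : ({j | v j < s} : Finset ι) ⊆ ({j | v j ≤ v i} : Finset ι) := fun j hj => by
      simpa using hmax j hj
    exact (mem_filter.1 hi).2.not_ge (h _ (hks.trans (card_le_card hsub)))
  · intro h q hq
    by_contra! hqs
    have hsub : ({j | v j ≤ q} : Finset ι) ⊆ ({j | v j < s} : Finset ι) := fun j hj => by
      simpa using (mem_filter.1 hj).2.trans_lt hqs
    exact (hq.trans (card_le_card hsub)).not_gt h

end OrderStatistic

section Exchangeability

theorem natCast_mul_measure_univ_le_sum_measure {ι X : Type*} [Fintype ι] [MeasurableSpace X]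
    (μ : Measure X) {F : ι → Set X} (hF : ∀ j, MeasurableSet (F j)) {k : ℕ}
    (h : ∀ x, k ≤ #{j | x ∈ F j}) : k * μ Set.univ ≤ ∑ j, μ (F j) :=
  calc (k : ℝ≥0∞) * μ Set.univ = ∫⁻ _, (k : ℝ≥0∞) ∂μ := (lintegral_const _).symm
    _ ≤ ∫⁻ x, ∑ j, (F j).indicator 1 x ∂μ := lintegral_mono fun x => by
        simpa [Set.indicator_apply] using (Nat.cast_le (α := ℝ≥0∞)).2 (h x)
    _ = ∑ j, μ (F j) := by
        rw [lintegral_finsetSum _ fun j _ => measurable_one.indicator (hF j)]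
        simp only [lintegral_indicator_one (hF _)]

variable {ι α : Type*} [Fintype ι] [LinearOrder α] [MeasurableSpace α]

theorem measure_pi_strictRank_lt_eq [DecidableEq ι] (μ : Measure α) [SigmaFinite μ] (k : ℕ)
    (j j' : ι) :
    Measure.pi (fun _ : ι => μ) {x | strictRank x j < k} =
      Measure.pi (fun _ : ι => μ) {x | strictRank x j' < k} := by
  have hpres := measurePreserving_piCongrLeft (fun _ : ι => μ) (Equiv.swap j j')
  rw [← hpres.measure_preimage_equiv]
  congr 1
  ext x
  have hx : MeasurableEquiv.piCongrLeft (fun _ => α) (Equiv.swap j j') x =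
      x ∘ Equiv.swap j j' := by
    ext i
    simpa using MeasurableEquiv.piCongrLeft_apply_apply (β := fun _ => α) (Equiv.swap j j') x
      (Equiv.swap j j' i)
  simp [hx, strictRank_comp_equiv]

variable [TopologicalSpace α] [OpensMeasurableSpace α] [OrderClosedTopology α]
  [SecondCountableTopology α]

theorem measurableSet_strictRank_lt (j : ι) (k : ℕ) :
    MeasurableSet {x : ι → α | strictRank x j < k} := by
  have : Measurable fun x : ι → α => strictRank x j := by
    simp only [strictRank, card_filter]
    exact Finset.measurable_sum _ fun i _ => Measurable.ite
      (measurableSet_lt (measurable_pi_apply i) (measurable_pi_apply j)) measurable_const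
      measurable_const
  exact measurableSet_lt this measurable_const

theorem natCast_le_card_mul_measure_strictRank_lt {Ω : Type*} [MeasurableSpace Ω] {P : Measure Ω}
    [IsProbabilityMeasure P] {S : ι → Ω → α} (hS : ∀ i, Measurable (S i))
    (hindep : iIndepFun S P) (hident : ∀ i j, IdentDistrib (S i) (S j) P P) {k : ℕ}
    (hk : k ≤ Fintype.card ι) (j : ι) :
    (k : ℝ≥0∞) ≤ Fintype.card ι * P {ω | strictRank (fun i => S i ω) j < k} := by
  have := Measure.isProbabilityMeasure_map (μ := P) (hS j).aemeasurable
  have hlaw : P.map (fun ω i => S i ω) = Measure.pi fun _ : ι => P.map (S j) := by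
    rw [hindep.map_fun_eq_pi_map fun i => (hS i).aemeasurable]
    exact congrArg Measure.pi (funext fun i => (hident i j).map_eq)
  have hsum := natCast_mul_measure_univ_le_sum_measure (Measure.pi fun _ : ι => P.map (S j))
    (fun j' => measurableSet_strictRank_lt j' k) fun x => by
      simpa using le_card_filter_strictRank_lt x hk
  rw [Finset.sum_congr rfl fun j' _ => measure_pi_strictRank_lt_eq _ k j' j, sum_const, card_univ,
    measure_univ, mul_one, nsmul_eq_mul] at hsum
  rwa [← hlaw, Measure.map_apply (measurable_pi_lambda _ hS) (measurableSet_strictRank_lt j k)]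
    at hsum

end Exchangeability

theorem split_conformal_rank_lemma_general
    {Ω : Type*} [MeasurableSpace Ω] (P : Measure Ω) [IsProbabilityMeasure P]
    (n : ℕ) (α : ℝ) (hα1 : α < 1)
    (hk : ⌈((n : ℝ) + 1) * (1 - α)⌉ ≤ (n : ℤ))
    (S : Fin (n + 1) → Ω → ℝ)
    (hSmeas : ∀ i, Measurable (S i))
    (hindep : iIndepFun S P)
    (hident : ∀ i j, IdentDistrib (S i) (S j) P P)
    (qhat : Ω → ℝ)
    (hqhat : ∀ ω, qhat ω = sInf {q : ℝ |
      (⌈((n : ℝ) + 1) * (1 - α)⌉ : ℝ) / n ≤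
        ((Finset.univ.filter (fun i : Fin n => S i.castSucc ω ≤ q)).card : ℝ) / n}) :
    ENNReal.ofReal (1 - α) ≤ P {ω | S (Fin.last n) ω ≤ qhat ω} := by
  have hceil_pos : 0 < ⌈((n : ℝ) + 1) * (1 - α)⌉ :=
    Int.ceil_pos.2 (mul_pos (by positivity) (by linarith))
  obtain ⟨k, hk_eq⟩ : ∃ k : ℕ, ⌈((n : ℝ) + 1) * (1 - α)⌉ = k :=
    ⟨_, (Int.toNat_of_nonneg hceil_pos.le).symm⟩
  have hk_cast : ((⌈((n : ℝ) + 1) * (1 - α)⌉ : ℤ) : ℝ) = k := by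
    rw [hk_eq, Int.cast_natCast]
  have hn : (0 : ℝ) < n := by exact_mod_cast (by omega : 0 < n)
  have hevent : {ω | S (Fin.last n) ω ≤ qhat ω} =
      {ω | strictRank (fun i => S i ω) (Fin.last n) < k} := by
    ext ω
    simp only [Set.mem_ofPred_eq, hqhat, hk_cast, div_le_div_iff_of_pos_right hn, Nat.cast_le,
      strictRank_last]
    exact le_sInf_setOf_le_card_filter_le_iff _ (by omega) (by simp; omega) _
  have hcover := natCast_le_card_mul_measure_strictRank_lt hSmeas hindep hident (k := k)
    (by simp; omega) (Fin.last n)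
  rw [Fintype.card_fin, ← hevent] at hcover
  rw [← ENNReal.mul_le_mul_iff_right (a := (n + 1 : ℕ)) (by simp) (by simp)]
  calc ((n + 1 : ℕ) : ℝ≥0∞) * ENNReal.ofReal (1 - α)
      = ENNReal.ofReal ((n + 1) * (1 - α)) := by
        rw [ENNReal.ofReal_mul (by positivity)]; norm_cast
    _ ≤ k := by
        rw [← ENNReal.ofReal_natCast, ← hk_cast]; exact ENNReal.ofReal_le_ofReal (Int.le_ceil _)
    _ ≤ _ := hcover

/-- **Rank/quantile lemma underlying split conformal prediction.**
If `S 0, …, S n` are i.i.d. real-valued random variables, `0 < α < 1` with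
`⌈(n+1)(1-α)⌉ ≤ n`, and `q̂` is the empirical `⌈(n+1)(1-α)⌉/n`-quantile of the first `n`
variables, i.e. `q̂ = inf {q | #{i ≤ n : Sᵢ ≤ q}/n ≥ ⌈(n+1)(1-α)⌉/n}`, then
`P(S_{n+1} ≤ q̂) ≥ 1 - α`. -/
theorem split_conformal_rank_lemma
    {Ω : Type*} [MeasurableSpace Ω] (P : Measure Ω) [IsProbabilityMeasure P]
    (n : ℕ) (hn : 0 < n) (α : ℝ) (hα0 : 0 < α) (hα1 : α < 1)
    (hk : ⌈((n : ℝ) + 1) * (1 - α)⌉ ≤ (n : ℤ))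
    (S : Fin (n + 1) → Ω → ℝ)
    (hSmeas : ∀ i, Measurable (S i))
    (hindep : iIndepFun S P)
    (hident : ∀ i j, IdentDistrib (S i) (S j) P P)
    (qhat : Ω → ℝ)
    (hqhat : ∀ ω, qhat ω = sInf {q : ℝ |
      (⌈((n : ℝ) + 1) * (1 - α)⌉ : ℝ) / n ≤
        ((Finset.univ.filter (fun i : Fin n => S i.castSucc ω ≤ q)).card : ℝ) / n}) :
    ENNReal.ofReal (1 - α) ≤ P {ω | S (Fin.last n) ω ≤ qhat ω} :=
  split_conformal_rank_lemma_general P n α hα1 hk S hSmeas hindep hident qhat hqhat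
end

section
/- Conformal calibration coverage guarantee. Let 𝒳 be a measurable space, let n be a positive natural number, let α ∈ (0,1) be such that ⌈(n+1)(1−α)⌉ ≤ n, and let (X₁,Y₁), …, (Xₙ,Yₙ), (X_test, Y_test) be independent and identically distributed random pairs taking values in 𝒳 × ℝ. Let s : 𝒳 × ℝ → ℝ be a measurable score function. Define q̂ = inf{q ∈ ℝ : #{i ≤ n : s(Xᵢ,Yᵢ) ≤ q}/n ≥ ⌈(n+1)(1−α)⌉/n}, and define the prediction set 𝒞(X_test) = {y ∈ ℝ : s(X_test, y) ≤ q̂}. Then ℙ(Y_test ∈ 𝒞(X_test)) ≥ 1 − α. -/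
/-!
Let `k = ⌈(n+1)(1-α)⌉` and let `T` be the `k`-th smallest of all `n+1` scores, the test score
included. The calibration scores are among them, so `T ≤ q̂`. The joint law of i.i.d. pairs is
invariant under permutations of the coordinates and `T` is a symmetric function of them, so the
`n+1` events `sᵢ ≤ T` are equiprobable; at least `k` of them occur at every sample, hence each has
probability at least `k/(n+1) ≥ 1 - α`.
-/

open MeasureTheory ProbabilityTheory Finset
open scoped Classical ENNReal

lemma ENNReal.ofReal_le_natCast_div {r : ℝ} {k m : ℕ} (hm : 0 < m) (h : r * m ≤ k) :
    ENNReal.ofReal r ≤ (k : ℝ≥0∞) / m := by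
  rw [← ENNReal.ofReal_natCast k, ← ENNReal.ofReal_natCast m,
    ← ENNReal.ofReal_div_of_pos (Nat.cast_pos.2 hm)]
  exact ENNReal.ofReal_le_ofReal ((le_div_iff₀ (Nat.cast_pos.2 hm)).2 h)

namespace Conformal

section EmpiricalQuantile

variable {ι ι' : Type*} [Fintype ι] [Fintype ι']

noncomputable def countLE (w : ι → ℝ) (q : ℝ) : ℕ := #{i | w i ≤ q}

lemma countLE_mono (w : ι → ℝ) : Monotone (countLE w) :=
  fun _ _ hqq' => card_le_card fun _ => by simpa using fun hi => hi.trans hqq'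

lemma le_countLE_iff {w : ι → ℝ} {k : ℕ} {q : ℝ} :
    k ≤ countLE w q ↔ ∃ t : Finset ι, #t = k ∧ ∀ i ∈ t, w i ≤ q := by
  constructor
  · intro hk
    obtain ⟨t, hts, rfl⟩ := exists_subset_card_eq hk
    exact ⟨t, rfl, fun i hi => (mem_filter.1 (hts hi)).2⟩
  · rintro ⟨t, rfl, ht⟩
    exact card_le_card fun i hi => mem_filter.2 ⟨mem_univ i, ht i hi⟩

lemma isClosed_setOf_le_countLE (w : ι → ℝ) (k : ℕ) : IsClosed {q | k ≤ countLE w q} := by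
  simp only [le_countLE_iff, Set.ofPred_exists, Set.ofPred_and]
  refine isClosed_iUnion_of_finite fun t => isClosed_const.inter ?_
  simp only [Set.ofPred_forall]
  exact isClosed_biInter fun i _ => isClosed_Ici

lemma countLE_comp_equiv (w : ι → ℝ) (e : ι' ≃ ι) : countLE (w ∘ e) = countLE w :=
  funext fun _ => card_equiv e (by simp)

lemma countLE_comp_le (w : ι → ℝ) {f : ι' → ι} (hf : f.Injective) (q : ℝ) :
    countLE (w ∘ f) q ≤ countLE w q :=
  card_le_card_of_injOn f (fun i hi => by simpa using hi) hf.injOn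

/-- For `1 ≤ k ≤ card ι`, the `k`-th smallest entry of `w`. -/
noncomputable def empiricalQuantile (k : ℕ) (w : ι → ℝ) : ℝ := sInf {q | k ≤ countLE w q}

variable {k : ℕ}

lemma empiricalQuantile_le_iff (hk₀ : 1 ≤ k) (hk : k ≤ Fintype.card ι) (w : ι → ℝ) {q : ℝ} :
    empiricalQuantile k w ≤ q ↔ k ≤ countLE w q := by
  obtain ⟨b, hb⟩ := (Set.finite_range w).bddBelow
  have hbdd : BddBelow {q | k ≤ countLE w q} := by
    refine ⟨b, fun q hq => ?_⟩
    obtain ⟨i, hi⟩ := card_pos.1 (Nat.succ_le_iff.1 (hk₀.trans hq))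
    exact (hb (Set.mem_range_self i)).trans (mem_filter.1 hi).2
  have hne : {q | k ≤ countLE w q}.Nonempty := by
    obtain ⟨c, hc⟩ := (Set.finite_range w).bddAbove
    exact ⟨c, hk.trans_eq (by simp [countLE, fun i => hc (Set.mem_range_self i)])⟩
  refine ⟨fun h => ?_, fun h => csInf_le hbdd h⟩
  exact ((isClosed_setOf_le_countLE w k).csInf_mem hne hbdd).trans (countLE_mono w h)

lemma sInf_setOf_div_le_countLE_div {c : ℝ} (hc : 0 < c) (w : ι → ℝ) :
    sInf {q | (k : ℝ) / c ≤ countLE w q / c} = empiricalQuantile k w := by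
  simp only [div_le_div_iff_of_pos_right hc, Nat.cast_le, empiricalQuantile]

lemma le_countLE_empiricalQuantile (hk₀ : 1 ≤ k) (hk : k ≤ Fintype.card ι) (w : ι → ℝ) :
    k ≤ countLE w (empiricalQuantile k w) :=
  (empiricalQuantile_le_iff hk₀ hk w).1 le_rfl

lemma empiricalQuantile_comp_equiv (w : ι → ℝ) (e : ι' ≃ ι) :
    empiricalQuantile k (w ∘ e) = empiricalQuantile k w := by
  rw [empiricalQuantile, countLE_comp_equiv, empiricalQuantile]

lemma empiricalQuantile_le_comp (hk₀ : 1 ≤ k) (hk : k ≤ Fintype.card ι') (w : ι → ℝ)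
    {f : ι' → ι} (hf : f.Injective) : empiricalQuantile k w ≤ empiricalQuantile k (w ∘ f) :=
  (empiricalQuantile_le_iff hk₀ (hk.trans (Fintype.card_le_of_injective f hf)) w).2 <|
    (le_countLE_empiricalQuantile hk₀ hk (w ∘ f)).trans (countLE_comp_le w hf _)

lemma measurableSet_le_countLE {α : Type*} [MeasurableSpace α] {g : ι → α → ℝ}
    (hg : ∀ i, Measurable (g i)) (q : ℝ) :
    MeasurableSet {x | k ≤ countLE (fun i => g i x) q} := by
  simp only [le_countLE_iff, Set.ofPred_exists, Set.ofPred_and, Set.ofPred_forall]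
  exact MeasurableSet.iUnion fun t => (MeasurableSet.const _).inter <|
    Finset.measurableSet_biInter t fun i _ => measurableSet_le (hg i) measurable_const

lemma measurable_empiricalQuantile (hk₀ : 1 ≤ k) (hk : k ≤ Fintype.card ι) {α : Type*}
    [MeasurableSpace α] {g : ι → α → ℝ} (hg : ∀ i, Measurable (g i)) :
    Measurable fun x => empiricalQuantile k fun i => g i x := by
  refine measurable_of_Iic fun q => ?_
  simp only [Set.preimage, Set.mem_Iic, empiricalQuantile_le_iff hk₀ hk]
  exact measurableSet_le_countLE hg q

end EmpiricalQuantile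

section Exchangeability

variable {ι β : Type*} [MeasurableSpace β]

lemma measurePreserving_comp_perm_pi [Fintype ι] (ν : Measure β) [SigmaFinite ν]
    (σ : Equiv.Perm ι) :
    MeasurePreserving (fun v : ι → β => v ∘ σ) (Measure.pi fun _ => ν) (Measure.pi fun _ => ν) := by
  convert measurePreserving_piCongrLeft (fun _ : ι => ν) σ.symm using 1
  ext v i
  simp [MeasurableEquiv.coe_piCongrLeft, Equiv.piCongrLeft_apply]

lemma measure_eq_of_preimage_comp_perm {μ : Measure (ι → β)}
    (hμ : ∀ σ : Equiv.Perm ι, MeasurePreserving (fun v => v ∘ σ) μ μ)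
    {E : ι → Set (ι → β)} (hE : ∀ i, MeasurableSet (E i))
    (hperm : ∀ (σ : Equiv.Perm ι) i, (fun v => v ∘ σ) ⁻¹' E i = E (σ i)) (i j : ι) :
    μ (E i) = μ (E j) := by
  rw [← Equiv.swap_apply_left i j, ← hperm, (hμ _).measure_preimage (hE i).nullMeasurableSet]

lemma natCast_mul_le_sum_measure [Fintype ι] {α : Type*} [MeasurableSpace α] (μ : Measure α)
    {E : ι → Set α} (hE : ∀ i, MeasurableSet (E i)) {k : ℕ} (hk : ∀ x, k ≤ #{i | x ∈ E i}) :
    k * μ Set.univ ≤ ∑ i, μ (E i) :=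
  calc (k : ℝ≥0∞) * μ Set.univ = ∫⁻ _, (k : ℝ≥0∞) ∂μ := (lintegral_const _).symm
    _ ≤ ∫⁻ x, ∑ i, (E i).indicator 1 x ∂μ := lintegral_mono fun x => by
        simpa [Set.indicator_apply, Finset.sum_boole] using hk x
    _ = ∑ i, μ (E i) := by
        rw [lintegral_finsetSum _ fun i _ => measurable_one.indicator (hE i)]
        exact Finset.sum_congr rfl fun i _ => lintegral_indicator_one (hE i)

lemma map_fun_eq_pi_of_identDistrib [Fintype ι] {Ω : Type*} [MeasurableSpace Ω]
    {P : Measure Ω} [IsProbabilityMeasure P] {Z : ι → Ω → β} (hZ : ∀ i, AEMeasurable (Z i) P)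
    (hindep : iIndepFun Z P) (hident : ∀ i j, IdentDistrib (Z i) (Z j) P P) (j : ι) :
    P.map (fun ω i => Z i ω) = Measure.pi fun _ => P.map (Z j) := by
  rw [hindep.map_fun_eq_pi_map hZ]
  exact congrArg Measure.pi (funext fun i => (hident i j).map_eq)

end Exchangeability

theorem natCast_div_card_le_measure_le_empiricalQuantile {ι Ω β : Type*} [Fintype ι]
    [MeasurableSpace Ω] [MeasurableSpace β] {P : Measure Ω} [IsProbabilityMeasure P]
    {Z : ι → Ω → β} (hZ : ∀ i, AEMeasurable (Z i) P) (hindep : iIndepFun Z P)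
    (hident : ∀ i j, IdentDistrib (Z i) (Z j) P P) {g : β → ℝ} (hg : Measurable g) {k : ℕ}
    (hk₀ : 1 ≤ k) (hk : k ≤ Fintype.card ι) (j : ι) :
    (k : ℝ≥0∞) / Fintype.card ι ≤
      P {ω | g (Z j ω) ≤ empiricalQuantile k fun i => g (Z i ω)} := by
  set μ := P.map fun ω i => Z i ω
  have : IsProbabilityMeasure μ := Measure.isProbabilityMeasure_map (aemeasurable_pi_lambda _ hZ)
  have hμ : ∀ σ : Equiv.Perm ι, MeasurePreserving (fun v => v ∘ σ) μ μ := by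
    simpa only [μ, map_fun_eq_pi_of_identDistrib hZ hindep hident j] using
      measurePreserving_comp_perm_pi _
  set E : ι → Set (ι → β) := fun i => {v | g (v i) ≤ empiricalQuantile k (g ∘ v)}
  have hE : ∀ i, MeasurableSet (E i) := fun i =>
    measurableSet_le (hg.comp (measurable_pi_apply i))
      (measurable_empiricalQuantile hk₀ hk fun i => hg.comp (measurable_pi_apply i))
  have hEj : P {ω | g (Z j ω) ≤ empiricalQuantile k fun i => g (Z i ω)} = μ (E j) :=
    (Measure.map_apply_of_aemeasurable (aemeasurable_pi_lambda _ hZ) (hE j)).symm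
  have hperm : ∀ (σ : Equiv.Perm ι) i, (fun v => v ∘ σ) ⁻¹' E i = E (σ i) := fun σ i => by
    ext v
    simp only [E, Set.mem_preimage, Set.mem_ofPred_eq, Function.comp_apply, ← Function.comp_assoc,
      empiricalQuantile_comp_equiv]
  have hcount : (k : ℝ≥0∞) ≤ Fintype.card ι * μ (E j) := by
    have := natCast_mul_le_sum_measure μ hE fun v => le_countLE_empiricalQuantile hk₀ hk (g ∘ v)
    simpa [measure_eq_of_preimage_comp_perm hμ hE hperm _ j] using this
  rw [hEj]
  exact ENNReal.div_le_of_le_mul' hcount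

end Conformal

open Conformal

theorem conformal_calibration_coverage_general
    {Ω : Type*} [MeasurableSpace Ω] (P : Measure Ω) [IsProbabilityMeasure P]
    {𝒳 : Type*} [MeasurableSpace 𝒳]
    (n : ℕ) (α : ℝ) (hα1 : α < 1)
    (hk : ⌈((n : ℝ) + 1) * (1 - α)⌉ ≤ (n : ℤ))
    (Z : Fin (n + 1) → Ω → 𝒳 × ℝ)
    (hZmeas : ∀ i, Measurable (Z i))
    (hindep : iIndepFun Z P)
    (hident : ∀ i j, IdentDistrib (Z i) (Z j) P P)
    (s : 𝒳 × ℝ → ℝ) (hs : Measurable s)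
    (qhat : Ω → ℝ)
    (hqhat : ∀ ω, qhat ω = sInf {q : ℝ |
      (⌈((n : ℝ) + 1) * (1 - α)⌉ : ℝ) / n ≤
        ((Finset.univ.filter (fun i : Fin n => s (Z i.castSucc ω) ≤ q)).card : ℝ) / n})
    (C : Ω → Set ℝ)
    (hC : ∀ ω, C ω = {y : ℝ | s ((Z (Fin.last n) ω).1, y) ≤ qhat ω}) :
    ENNReal.ofReal (1 - α) ≤ P {ω | (Z (Fin.last n) ω).2 ∈ C ω} := by
  have hceil := Int.le_ceil (((n : ℝ) + 1) * (1 - α))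
  have hceil_pos : 0 < ⌈((n : ℝ) + 1) * (1 - α)⌉ :=
    Int.ceil_pos.2 (mul_pos (by positivity) (by linarith))
  lift ⌈((n : ℝ) + 1) * (1 - α)⌉ to ℕ using hceil_pos.le with k
  push_cast at hceil hqhat
  have hk₀ : 1 ≤ k := by omega
  have hkn : k ≤ n := by omega
  have hqhat_eq : ∀ ω, qhat ω = empiricalQuantile k fun i : Fin n => s (Z i.castSucc ω) :=
    fun ω => (hqhat ω).trans (sInf_setOf_div_le_countLE_div (Nat.cast_pos.2 (by omega)) _)
  calc ENNReal.ofReal (1 - α) ≤ (k : ℝ≥0∞) / Fintype.card (Fin (n + 1)) :=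
        ENNReal.ofReal_le_natCast_div (by simp) (by rw [Fintype.card_fin]; push_cast; linarith)
    _ ≤ P {ω | s (Z (Fin.last n) ω) ≤ empiricalQuantile k fun i => s (Z i ω)} :=
      natCast_div_card_le_measure_le_empiricalQuantile (fun i => (hZmeas i).aemeasurable)
        hindep hident hs hk₀ (by rw [Fintype.card_fin]; omega) (Fin.last n)
    _ ≤ P {ω | (Z (Fin.last n) ω).2 ∈ C ω} := measure_mono fun ω hω => by
      simp only [Set.mem_ofPred_eq, hC, hqhat_eq] at hω ⊢
      exact hω.trans (empiricalQuantile_le_comp hk₀ (by simpa using hkn) _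
        (Fin.castSucc_injective n))

/-- **Conformal calibration coverage guarantee (Theorem 3.1).**
Given i.i.d. pairs `(X₁,Y₁), …, (Xₙ,Yₙ), (X_test, Y_test)` in `𝒳 × ℝ`, a measurable score
function `s`, and the empirical quantile
`q̂ = inf {q | #{i ≤ n : s(Xᵢ,Yᵢ) ≤ q}/n ≥ ⌈(n+1)(1-α)⌉/n}` of the calibration scores,
the prediction set `𝒞(X_test) = {y | s(X_test, y) ≤ q̂}` satisfies
`ℙ(Y_test ∈ 𝒞(X_test)) ≥ 1 - α`. -/
theorem conformal_calibration_coverage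
    {Ω : Type*} [MeasurableSpace Ω] (P : Measure Ω) [IsProbabilityMeasure P]
    {𝒳 : Type*} [MeasurableSpace 𝒳]
    (n : ℕ) (hn : 0 < n) (α : ℝ) (hα0 : 0 < α) (hα1 : α < 1)
    (hk : ⌈((n : ℝ) + 1) * (1 - α)⌉ ≤ (n : ℤ))
    (Z : Fin (n + 1) → Ω → 𝒳 × ℝ)
    (hZmeas : ∀ i, Measurable (Z i))
    (hindep : iIndepFun Z P)
    (hident : ∀ i j, IdentDistrib (Z i) (Z j) P P)
    (s : 𝒳 × ℝ → ℝ) (hs : Measurable s)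
    (qhat : Ω → ℝ)
    (hqhat : ∀ ω, qhat ω = sInf {q : ℝ |
      (⌈((n : ℝ) + 1) * (1 - α)⌉ : ℝ) / n ≤
        ((Finset.univ.filter (fun i : Fin n => s (Z i.castSucc ω) ≤ q)).card : ℝ) / n})
    (C : Ω → Set ℝ)
    (hC : ∀ ω, C ω = {y : ℝ | s ((Z (Fin.last n) ω).1, y) ≤ qhat ω}) :
    ENNReal.ofReal (1 - α) ≤ P {ω | (Z (Fin.last n) ω).2 ∈ C ω} :=
  conformal_calibration_coverage_general P n α hα1 hk Z hZmeas hindep hident s hs qhat hqhat C hC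
end

section
/- Exchangeable version of the conformal coverage guarantee. Let n be a positive natural number, let α ∈ (0,1) be such that ⌈(n+1)(1−α)⌉ ≤ n, and let S₁, …, Sₙ, S_{n+1} be real-valued random variables on a probability space whose joint distribution is exchangeable, i.e., for every permutation π of {1, …, n+1} the random vector (S_{π(1)}, …, S_{π(n+1)}) has the same law as (S₁, …, S_{n+1}). Define q̂ to be the ⌈(n+1)(1−α)⌉-th smallest value among S₁, …, Sₙ. Then ℙ(S_{n+1} ≤ q̂) ≥ 1 − α. -/
/-!
Put `k = ⌈(n+1)(1-α)⌉`. The event `S_{n+1} ≤ q̂` says that fewer than `k` of the scores lie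
strictly below `S_{n+1}`. In any `n+1` reals at least `k` entries have fewer than `k` entries
strictly below them (all entries up to the `k`-th smallest do), so the `n+1` events
"fewer than `k` scores lie below `S_j`" have probabilities summing to at least `k`.
Exchangeability makes these probabilities equal, hence each is at least `k/(n+1) ≥ 1 - α`.
-/

open MeasureTheory ProbabilityTheory
open scoped Classical

/-- The `k`-th smallest value (order statistic of rank `k`, 1-indexed) of a list of reals. -/
noncomputable def kthSmallest (l : List ℝ) (k : ℕ) : ℝ :=
  (l.mergeSort (fun a b => a ≤ b)).getD (k - 1) 0

open Finset
open scoped ENNReal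

namespace List.SortedLE

variable {α : Type*} [LinearOrder α] {s : List α} {k : ℕ}

theorem lt_countP_le_getElem (hs : s.SortedLE) (hk : k < s.length) :
    k < s.countP (· ≤ s[k]) := by
  have htake : ∀ a ∈ s.take (k + 1), a ≤ s[k] := by
    intro a ha
    obtain ⟨i, hi, rfl⟩ := List.mem_iff_getElem.1 ha
    rw [List.getElem_take]
    exact hs.getElem_le_getElem_of_le (by rw [List.length_take] at hi; omega)
  have hcount : (s.take (k + 1)).countP (· ≤ s[k]) = k + 1 := by
    rw [List.countP_eq_length.2 (by simpa using htake), List.length_take]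
    omega
  have := (List.take_sublist (k + 1) s).countP_le (p := (· ≤ s[k]))
  omega

theorem countP_lt_getElem_le (hs : s.SortedLE) (hk : k < s.length) :
    s.countP (· < s[k]) ≤ k := by
  have hdrop : (s.drop k).countP (· < s[k]) = 0 := by
    refine List.countP_eq_zero.2 fun a ha => ?_
    obtain ⟨i, hi, rfl⟩ := List.mem_iff_getElem.1 ha
    rw [List.getElem_drop]
    simpa using hs.getElem_le_getElem_of_le (Nat.le_add_right k i)
  calc s.countP (· < s[k])
      = (s.take k).countP (· < s[k]) + (s.drop k).countP (· < s[k]) := by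
        rw [← List.countP_append, List.take_append_drop]
    _ ≤ k := by
      rw [hdrop, add_zero]
      exact List.countP_le_length.trans (List.length_take_le _ _)

theorem le_getElem_iff_countP_lt_le (hs : s.SortedLE) (hk : k < s.length) (x : α) :
    x ≤ s[k] ↔ s.countP (· < x) ≤ k := by
  constructor
  · intro hx
    refine le_trans (List.countP_mono_left fun a _ ha => ?_) (hs.countP_lt_getElem_le hk)
    simp only [decide_eq_true_eq] at ha ⊢
    exact ha.trans_le hx
  · intro hcount
    by_contra! hx
    refine (hs.lt_countP_le_getElem hk).not_ge
      (le_trans (List.countP_mono_left fun a _ ha => ?_) hcount)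
    simp only [decide_eq_true_eq] at ha ⊢
    exact ha.trans_lt hx

end List.SortedLE

section kthSmallest

variable {l : List ℝ} {k : ℕ}

theorem kthSmallest_eq_getElem (hk0 : 0 < k) (hkl : k ≤ l.length) :
    kthSmallest l k =
      (l.mergeSort (fun a b => a ≤ b))[k - 1]'(by rw [List.length_mergeSort]; omega) :=
  List.getD_eq_getElem _ _ _

theorem le_kthSmallest_iff (hk0 : 0 < k) (hkl : k ≤ l.length) (x : ℝ) :
    x ≤ kthSmallest l k ↔ l.countP (· < x) < k := by
  rw [kthSmallest_eq_getElem hk0 hkl, List.sortedLE_mergeSort.le_getElem_iff_countP_lt_le,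
    (List.mergeSort_perm _ _).countP_eq]
  omega

theorem le_countP_le_kthSmallest (hk0 : 0 < k) (hkl : k ≤ l.length) :
    k ≤ l.countP (· ≤ kthSmallest l k) := by
  have := (List.sortedLE_mergeSort (l := l)).lt_countP_le_getElem
    (k := k - 1) (by rw [List.length_mergeSort]; omega)
  rw [kthSmallest_eq_getElem hk0 hkl, ← (List.mergeSort_perm l (fun a b => a ≤ b)).countP_eq]
  omega

end kthSmallest

theorem List.countP_ofFn {α : Type*} {m : ℕ} (f : Fin m → α) (p : α → Prop) [DecidablePred p] :
    (List.ofFn f).countP (fun a => decide (p a)) = #{i | p (f i)} := by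
  rw [← Multiset.coe_countP, ← Fin.univ_val_map, Multiset.countP_map, Finset.card_def,
    Finset.filter_val]

def numBelow {ι α : Type*} [Fintype ι] [LinearOrder α] (x : ι → α) (j : ι) : ℕ :=
  #{i | x i < x j}

section numBelow

variable {ι α : Type*} [Fintype ι] [LinearOrder α]

theorem numBelow_comp_equiv {κ : Type*} [Fintype κ] (x : ι → α) (e : κ ≃ ι) (j : κ) :
    numBelow (x ∘ e) j = numBelow x (e j) :=
  Finset.card_equiv e (by simp)

theorem measurable_numBelow (j : ι) : Measurable fun x : ι → ℝ => numBelow x j := by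
  simp only [numBelow, Finset.card_filter]
  exact Finset.measurable_sum _ fun i _ => Measurable.ite
    (measurableSet_lt (measurable_pi_apply i) (measurable_pi_apply j))
    measurable_const measurable_const

end numBelow

theorem Fin.le_card_numBelow_lt {m k : ℕ} (x : Fin m → ℝ) (hkm : k ≤ m) :
    k ≤ #{j | numBelow x j < k} := by
  rcases Nat.eq_zero_or_pos k with rfl | hk0
  · exact Nat.zero_le _
  have hlen : k ≤ (List.ofFn x).length := by rwa [List.length_ofFn]
  set t := kthSmallest (List.ofFn x) k
  have hbelow : #{i | x i < t} < k := by
    simpa [List.countP_ofFn] using (le_kthSmallest_iff hk0 hlen t).1 le_rfl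
  have hcard_le : k ≤ #{j | x j ≤ t} := by
    simpa [List.countP_ofFn] using le_countP_le_kthSmallest hk0 hlen
  refine hcard_le.trans (Finset.card_le_card fun j hj => ?_)
  simp only [Finset.mem_filter, Finset.mem_univ, true_and] at hj ⊢
  exact lt_of_le_of_lt (Finset.card_le_card (Finset.monotone_filter_right _
    fun _ _ => (lt_of_lt_of_le · hj))) hbelow

theorem le_card_numBelow_lt {ι : Type*} [Fintype ι] {k : ℕ} (x : ι → ℝ)
    (hk : k ≤ Fintype.card ι) : k ≤ #{j | numBelow x j < k} := by
  let e := Fintype.equivFin ι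
  calc k ≤ #{j | numBelow (x ∘ e.symm) j < k} := Fin.le_card_numBelow_lt _ hk
    _ = #{j | numBelow x j < k} := Finset.card_equiv e.symm (by simp [numBelow_comp_equiv])

theorem le_kthSmallest_ofFn_castSucc_iff {n k : ℕ} (x : Fin (n + 1) → ℝ) (hk0 : 0 < k)
    (hkn : k ≤ n) :
    x (Fin.last n) ≤ kthSmallest (List.ofFn fun i : Fin n => x i.castSucc) k ↔
      numBelow x (Fin.last n) < k := by
  rw [le_kthSmallest_iff hk0 (by rwa [List.length_ofFn]), List.countP_ofFn, numBelow,
    Finset.card_filter, Finset.card_filter, Fin.sum_univ_castSucc]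
  simp

theorem MeasureTheory.le_sum_measure_of_le_card {Ω ι : Type*} [MeasurableSpace Ω] [Fintype ι]
    (μ : Measure Ω) {B : ι → Set Ω} (hB : ∀ j, MeasurableSet (B j)) {k : ℕ}
    (hcover : ∀ ω, k ≤ #{j | ω ∈ B j}) :
    k * μ Set.univ ≤ ∑ j, μ (B j) := by
  have hcount : ∀ ω, (#{j | ω ∈ B j} : ℝ≥0∞) = ∑ j, (B j).indicator 1 ω := by
    intro ω
    simp [Set.indicator_apply]
  calc k * μ Set.univ = ∫⁻ _, (k : ℝ≥0∞) ∂μ := (lintegral_const _).symm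
    _ ≤ ∫⁻ ω, ∑ j, (B j).indicator 1 ω ∂μ :=
      lintegral_mono fun ω => (hcount ω) ▸ Nat.cast_le.2 (hcover ω)
    _ = ∑ j, μ (B j) := by
      rw [lintegral_finsetSum _ fun j _ => measurable_one.indicator (hB j)]
      simp_rw [lintegral_indicator_one (hB _)]

def Exchangeable {Ω ι : Type*} [MeasurableSpace Ω] (X : Ω → ι → ℝ) (μ : Measure Ω) : Prop :=
  ∀ π : Equiv.Perm ι, IdentDistrib (fun ω i => X ω (π i)) X μ μ

section Exchangeable

variable {Ω ι : Type*} [MeasurableSpace Ω] [Fintype ι] {μ : Measure Ω} {X : Ω → ι → ℝ}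

theorem Exchangeable.measure_numBelow_lt_eq (hX : Exchangeable X μ) (i j : ι) (k : ℕ) :
    μ {ω | numBelow (X ω) i < k} = μ {ω | numBelow (X ω) j < k} := by
  have hlaw := (hX (Equiv.swap i j)).measure_mem_eq
    (measurable_numBelow i (measurableSet_Iio (a := k)))
  refine hlaw.symm.trans (congrArg μ (Set.ext fun ω => ?_))
  change numBelow (X ω ∘ Equiv.swap i j) i < k ↔ numBelow (X ω) j < k
  rw [numBelow_comp_equiv, Equiv.swap_apply_left]

theorem Exchangeable.le_card_mul_measure_numBelow_lt [IsProbabilityMeasure μ]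
    (hX : Exchangeable X μ) (hXm : Measurable X) {k : ℕ} (hk : k ≤ Fintype.card ι) (j : ι) :
    (k : ℝ≥0∞) ≤ Fintype.card ι * μ {ω | numBelow (X ω) j < k} := by
  have hsum := le_sum_measure_of_le_card μ (B := fun i => {ω | numBelow (X ω) i < k})
    (fun i => hXm (measurable_numBelow i (measurableSet_Iio (a := k))))
    fun ω => by simpa using le_card_numBelow_lt (X ω) hk
  rw [measure_univ, mul_one] at hsum
  simpa [hX.measure_numBelow_lt_eq _ j] using hsum

end Exchangeable

theorem conformal_coverage_exchangeable_general
    {Ω : Type*} [MeasurableSpace Ω] (P : Measure Ω) [IsProbabilityMeasure P]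
    (n : ℕ) (α : ℝ) (hα1 : α < 1)
    (hk : ⌈((n : ℝ) + 1) * (1 - α)⌉ ≤ (n : ℤ))
    (S : Fin (n + 1) → Ω → ℝ)
    (hSmeas : ∀ i, Measurable (S i))
    (hexch : ∀ π : Equiv.Perm (Fin (n + 1)),
      IdentDistrib (fun ω => fun i => S (π i) ω) (fun ω => fun i => S i ω) P P)
    (qhat : Ω → ℝ)
    (hqhat : ∀ ω, qhat ω =
      kthSmallest (List.ofFn (fun i : Fin n => S i.castSucc ω))
        (⌈((n : ℝ) + 1) * (1 - α)⌉.toNat)) :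
    ENNReal.ofReal (1 - α) ≤ P {ω | S (Fin.last n) ω ≤ qhat ω} := by
  set k := ⌈((n : ℝ) + 1) * (1 - α)⌉.toNat
  have hceil_pos : 0 < ⌈((n : ℝ) + 1) * (1 - α)⌉ :=
    Int.ceil_pos.2 (mul_pos (by positivity) (by linarith))
  have hquantile : ((n : ℝ) + 1) * (1 - α) ≤ k := calc
    _ ≤ (⌈((n : ℝ) + 1) * (1 - α)⌉ : ℝ) := Int.le_ceil _
    _ = ((k : ℤ) : ℝ) := by rw [Int.toNat_of_nonneg hceil_pos.le]
    _ = k := Int.cast_natCast k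
  have hevent : {ω | S (Fin.last n) ω ≤ qhat ω} =
      {ω | numBelow (fun i => S i ω) (Fin.last n) < k} := by
    ext ω
    simp only [Set.mem_ofPred_eq, hqhat]
    exact le_kthSmallest_ofFn_castSucc_iff (fun i => S i ω) (by omega) (by omega)
  have hcount := Exchangeable.le_card_mul_measure_numBelow_lt (X := fun ω i => S i ω) hexch
    (measurable_pi_lambda _ hSmeas) (k := k) (by rw [Fintype.card_fin]; omega) (Fin.last n)
  rw [Fintype.card_fin, ← hevent] at hcount
  refine (ENNReal.mul_le_mul_iff_right (Nat.cast_ne_zero.2 n.succ_ne_zero)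
    (ENNReal.natCast_ne_top _)).1 ?_
  calc ((n + 1 : ℕ) : ℝ≥0∞) * ENNReal.ofReal (1 - α)
      = ENNReal.ofReal (((n : ℝ) + 1) * (1 - α)) := by
        rw [ENNReal.ofReal_mul (by positivity), ← ENNReal.ofReal_natCast]
        push_cast; rfl
    _ ≤ k := ENNReal.ofReal_le_of_le_toReal (by simpa using hquantile)
    _ ≤ _ := hcount

/-- **Exchangeable version of the conformal coverage guarantee.**
If the joint distribution of `S 0, …, S n` is exchangeable (invariant in law under every
permutation of the indices), `0 < α < 1` with `⌈(n+1)(1-α)⌉ ≤ n`, and `q̂` is the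
`⌈(n+1)(1-α)⌉`-th smallest value among the first `n` variables, then
`ℙ(S_{n+1} ≤ q̂) ≥ 1 - α`. -/
theorem conformal_coverage_exchangeable
    {Ω : Type*} [MeasurableSpace Ω] (P : Measure Ω) [IsProbabilityMeasure P]
    (n : ℕ) (hn : 0 < n) (α : ℝ) (hα0 : 0 < α) (hα1 : α < 1)
    (hk : ⌈((n : ℝ) + 1) * (1 - α)⌉ ≤ (n : ℤ))
    (S : Fin (n + 1) → Ω → ℝ)
    (hSmeas : ∀ i, Measurable (S i))
    (hexch : ∀ π : Equiv.Perm (Fin (n + 1)),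
      IdentDistrib (fun ω => fun i => S (π i) ω) (fun ω => fun i => S i ω) P P)
    (qhat : Ω → ℝ)
    (hqhat : ∀ ω, qhat ω =
      kthSmallest (List.ofFn (fun i : Fin n => S i.castSucc ω))
        (⌈((n : ℝ) + 1) * (1 - α)⌉.toNat)) :
    ENNReal.ofReal (1 - α) ≤ P {ω | S (Fin.last n) ω ≤ qhat ω} :=
  conformal_coverage_exchangeable_general P n α hα1 hk S hSmeas hexch qhat hqhat
end
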